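/- For any complex matrix G, the sequence ‖G^(t)‖_F^{2^{1-t}} converges to the spectral norm σ₁(G) as t → ∞. -/

import Mathlib

open Matrix Filter Topology

noncomputable def frobNorm {m n : Type*} [Fintype m] [Fintype n] (G : Matrix m n ℂ) : ℝ :=
  Real.sqrt (∑ i, ∑ j, ‖G i j‖ ^ 2)

noncomputable def singVals {m n : Type*} [Fintype m] [Fintype n] [DecidableEq n]
    (G : Matrix m n ℂ) : n → ℝ :=
  fun i => Real.sqrt ((Matrix.isHermitian_conjTranspose_mul_self G).eigenvalues i)

noncomputable def specNorm {m n : Type*} [Fintype m] [Fintype n] [DecidableEq n]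
    (G : Matrix m n ℂ) : ℝ :=
  ⨆ i, singVals G i

/-- `gramIter G t` is the Gram iterate `G⁽ᵗ⁺²⁾` of the sequence `G⁽¹⁾ = G`,
`G⁽ᵗ⁺¹⁾ = (G⁽ᵗ⁾)ᴴ G⁽ᵗ⁾`.  (The first iterate `G⁽¹⁾ = G` is kept separate since it has a
different shape.) -/
noncomputable def gramIter {m n : Type*} [Fintype m] [Fintype n] (G : Matrix m n ℂ) :
    ℕ → Matrix n n ℂ
  | 0 => Gᴴ * G
  | t + 1 => (gramIter G t)ᴴ * gramIter G t

/-- `gramBound G t` is the bound `‖G⁽ᵗ⁺¹⁾‖_F ^ (2^(1-(t+1)))` of the paper (paper index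
`t+1 ≥ 1`). -/
noncomputable def gramBound {m n : Type*} [Fintype m] [Fintype n] (G : Matrix m n ℂ) : ℕ → ℝ
  | 0 => frobNorm G
  | t + 1 => frobNorm (gramIter G t) ^ ((2 : ℝ) ^ (-(t + 1 : ℤ)))

theorem aux_trace_pow {n : Type*} [Fintype n] [DecidableEq n] {A : Matrix n n ℂ} (hA : A.IsHermitian) (m : ℕ) :
    (A ^ m).trace = ((∑ i, hA.eigenvalues i ^ m : ℝ) : ℂ) := by
  have hU := (Matrix.mem_unitaryGroup_iff').mp (hA.eigenvectorUnitary).2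
  have hU2 := (Matrix.mem_unitaryGroup_iff).mp (hA.eigenvectorUnitary).2
  set U : Matrix n n ℂ := (hA.eigenvectorUnitary : Matrix n n ℂ) with hUdef
  have key : ∀ X : Matrix n n ℂ, star U * (U * X) = X := fun X => by
    rw [← mul_assoc, hU, one_mul]
  have h1 : A ^ m = U * (Matrix.diagonal (RCLike.ofReal ∘ hA.eigenvalues)) ^ m * star U := by
    induction m with
    | zero => simp [hU2]
    | succ t ih =>
      rw [pow_succ, ih]
      nth_rewrite 2 [hA.spectral_theorem]
      rw [pow_succ]
      simp only [Unitary.conjStarAlgAut_apply, ← hUdef, mul_assoc, key]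
  rw [h1, Matrix.trace_mul_cycle, hU, one_mul, Matrix.diagonal_pow, Matrix.trace_diagonal]
  push_cast
  simp [Function.comp]

theorem aux_frob_sq {n : Type*} [Fintype n] (B : Matrix n n ℂ) :
    ∑ i, ∑ j, ‖B i j‖ ^ 2 = (Matrix.trace (Bᴴ * B)).re := by
  simp only [Matrix.trace, Matrix.diag_apply, Matrix.mul_apply, Matrix.conjTranspose_apply]
  rw [Complex.re_sum, Finset.sum_comm]
  refine Finset.sum_congr rfl fun j _ => ?_
  rw [Complex.re_sum]
  refine Finset.sum_congr rfl fun i _ => ?_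
  have : (starRingEnd ℂ) (B i j) * B i j = ((‖B i j‖^2 : ℝ) : ℂ) := by
    rw [mul_comm, Complex.mul_conj, Complex.normSq_eq_norm_sq]
  rw [show star (B i j) = (starRingEnd ℂ) (B i j) from rfl, this, Complex.ofReal_re]

theorem aux_gramIter_eq {m n : Type*} [Fintype m] [Fintype n] [DecidableEq n] (G : Matrix m n ℂ) (t : ℕ) :
    gramIter G t = (Gᴴ * G) ^ (2 ^ t) := by
  induction t with
  | zero => simp [gramIter]
  | succ t ih =>
    rw [gramIter, ih, Matrix.conjTranspose_pow,
      (Matrix.isHermitian_conjTranspose_mul_self G).eq, ← pow_add, pow_succ, mul_two]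

theorem aux_frob_gramIter {m n : Type*} [Fintype m] [Fintype n] [DecidableEq n]
    (G : Matrix m n ℂ) (t : ℕ) :
    frobNorm (gramIter G t) =
      Real.sqrt (∑ i, (Matrix.isHermitian_conjTranspose_mul_self G).eigenvalues i ^ (2 ^ (t + 1))) := by
  rw [frobNorm, aux_frob_sq, aux_gramIter_eq, Matrix.conjTranspose_pow,
    (Matrix.isHermitian_conjTranspose_mul_self G).eq, ← pow_add, ← two_mul, ← pow_succ',
    aux_trace_pow (Matrix.isHermitian_conjTranspose_mul_self G), Complex.ofReal_re]

/-- The sequence `‖G⁽ᵗ⁾‖_F ^ (2^(1-t))` converges to the spectral norm `σ₁(G)` as `t → ∞`. -/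
theorem gramBound_tendsto_specNorm {p q : ℕ} (G : Matrix (Fin p) (Fin q) ℂ) :
    Tendsto (gramBound G) atTop (𝓝 (specNorm G)) := by
  rcases Nat.eq_zero_or_pos q with hq | hq
  · subst hq
    have h0 : ∀ t, gramBound G t = 0 := by
      intro t
      cases t with
      | zero => simp [gramBound, frobNorm]
      | succ t =>
        have h1 : frobNorm (gramIter G t) = 0 := by
          simp [frobNorm]
        rw [gramBound, h1, Real.zero_rpow (by positivity)]
    have hs : specNorm G = 0 := by
      unfold specNorm
      exact Real.iSup_of_isEmpty (singVals G)
    rw [hs, funext h0]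
    exact tendsto_const_nhds
  · haveI : Nonempty (Fin q) := ⟨⟨0, hq⟩⟩
    set hA := Matrix.isHermitian_conjTranspose_mul_self G with hAdef
    set lam : Fin q → ℝ := hA.eigenvalues with hlam
    have hnn : ∀ i, 0 ≤ lam i := fun i =>
      Matrix.eigenvalues_conjTranspose_mul_self_nonneg G i
    obtain ⟨i₀, hi₀⟩ := Finite.exists_max lam
    have hM0 : 0 ≤ lam i₀ := hnn i₀
    have hspec : specNorm G = Real.sqrt (lam i₀) := by
      refine le_antisymm (ciSup_le fun i => Real.sqrt_le_sqrt (hi₀ i)) ?_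
      exact le_ciSup (f := singVals G) (Set.Finite.bddAbove (Set.finite_range (singVals G))) i₀
    set ε : ℕ → ℝ := fun t => (2 : ℝ) ^ (-(t + 2 : ℤ)) with hε
    have hεpos : ∀ t, 0 < ε t := fun t => zpow_pos (by norm_num) _
    set s : ℕ → ℝ := fun t => ∑ i, lam i ^ (2 ^ (t + 1)) with hsdef
    have hs0 : ∀ t, 0 ≤ s t := fun t =>
      Finset.sum_nonneg fun i _ => pow_nonneg (hnn i) _
    have hNε : ∀ t : ℕ, ((2 ^ (t + 1) : ℕ) : ℝ) * ε t = 1 / 2 := by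
      intro t
      rw [hε]
      push_cast
      rw [← zpow_natCast (2:ℝ) (t+1), ← zpow_add₀ (two_ne_zero)]
      push_cast
      rw [show ((t:ℤ) + 1 + -((t:ℤ) + 2)) = (-1 : ℤ) by ring]
      norm_num
    have key : ∀ t, gramBound G (t + 1) = s t ^ ε t := by
      intro t
      rw [gramBound, aux_frob_gramIter, Real.sqrt_eq_rpow, ← Real.rpow_mul (hs0 t)]
      congr 1
      rw [hε]
      rw [show (-(t + 1 : ℤ)) = (-(t+2:ℤ)) + 1 by ring, zpow_add₀ (two_ne_zero)]
      ring
    have low : ∀ t, Real.sqrt (lam i₀) ≤ gramBound G (t + 1) := by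
      intro t
      rw [key]
      have h1 : lam i₀ ^ (2 ^ (t + 1)) ≤ s t :=
        Finset.single_le_sum (fun i _ => pow_nonneg (hnn i) _) (Finset.mem_univ i₀)
      calc Real.sqrt (lam i₀) = (lam i₀ ^ (2 ^ (t+1) : ℕ)) ^ ε t := by
            rw [← Real.rpow_natCast (lam i₀), ← Real.rpow_mul hM0, hNε,
              Real.sqrt_eq_rpow]
        _ ≤ s t ^ ε t := Real.rpow_le_rpow (pow_nonneg hM0 _) h1 (hεpos t).le
    have high : ∀ t, gramBound G (t + 1) ≤ (q : ℝ) ^ ε t * Real.sqrt (lam i₀) := by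
      intro t
      rw [key]
      have h1 : s t ≤ (q : ℝ) * lam i₀ ^ (2 ^ (t + 1)) := by
        calc s t ≤ ∑ _i : Fin q, lam i₀ ^ (2 ^ (t + 1)) :=
              Finset.sum_le_sum fun i _ => pow_le_pow_left₀ (hnn i) (hi₀ i) _
          _ = (q : ℝ) * lam i₀ ^ (2 ^ (t + 1)) := by
              rw [Finset.sum_const, Finset.card_univ, Fintype.card_fin, nsmul_eq_mul]
      calc s t ^ ε t ≤ ((q : ℝ) * lam i₀ ^ (2 ^ (t + 1))) ^ ε t :=
            Real.rpow_le_rpow (hs0 t) h1 (hεpos t).le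
        _ = (q : ℝ) ^ ε t * Real.sqrt (lam i₀) := by
            rw [Real.mul_rpow (by positivity) (by positivity)]
            congr 1
            rw [← Real.rpow_natCast (lam i₀), ← Real.rpow_mul hM0, hNε,
              Real.sqrt_eq_rpow]
    have hεtend : Tendsto ε atTop (𝓝 0) := by
      have h2 : ∀ t : ℕ, ε t = (1/2 : ℝ) ^ (t + 2) := by
        intro t
        show (2:ℝ) ^ (-((t:ℤ) + 2)) = (1/2 : ℝ) ^ (t + 2)
        rw [show (-((t:ℤ) + 2)) = -((t+2 : ℕ) : ℤ) by push_cast; ring,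
          _root_.zpow_neg, zpow_natCast, ← inv_pow]
        norm_num
      rw [funext h2]
      exact ((tendsto_pow_atTop_nhds_zero_of_lt_one (by norm_num) (by norm_num)).comp
        (tendsto_add_atTop_nat 2))
    have hqtend : Tendsto (fun t => (q : ℝ) ^ ε t * Real.sqrt (lam i₀)) atTop
        (𝓝 (Real.sqrt (lam i₀))) := by
      have h3 : Tendsto (fun t => (q : ℝ) ^ ε t) atTop (𝓝 1) := by
        have := Filter.Tendsto.rpow (tendsto_const_nhds (x := (q:ℝ)) (f := atTop)) hεtend
          (Or.inl (Nat.cast_ne_zero.mpr hq.ne'))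
        simpa using this
      simpa using h3.mul_const (Real.sqrt (lam i₀))
    have hshift : Tendsto (fun t => gramBound G (t + 1)) atTop (𝓝 (Real.sqrt (lam i₀))) :=
      tendsto_of_tendsto_of_tendsto_of_le_of_le tendsto_const_nhds hqtend low high
    rw [hspec]
    exact (tendsto_add_atTop_iff_nat 1).mp hshift
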